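/- arXiv:1609.00495 — 7 statements merged into one kernel-verified Lean document; each statement's English description precedes it below -/
import Mathlib

section
/- Let f be a polynomial in z, k and μ constants, and define h = −z·L_z(f) + k(z+μ)f², where L_z(f) = f·f'' − (f')² + (f/z)·f'. Then f divides the polynomial z·L_z(h) − 2k(z+μ)h². -/
/-!
Write `P = k(z+μ)`, `a = f'`, `b = f''`. Modulo `f` one has `h ≡ z a²`, `h' ≡ z a b` and
`h'' ≡ z b² − a b + 2 P a²`; substituting these, `z(h h'' − h'²) + h h' − 2 P h²` vanishes modulo `f`.
The computation uses only the Leibniz rule and `z'' = 0`, and works for every `P`.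
-/

open Polynomial

/-- The operator `L_z(f) = f·f'' − (f')² + (f/z)·f'`, viewed as a rational function. -/
noncomputable def Lz (f : Polynomial ℂ) : RatFunc ℂ :=
  algebraMap (Polynomial ℂ) (RatFunc ℂ) (f * derivative (derivative f) - (derivative f) ^ 2)
    + (algebraMap (Polynomial ℂ) (RatFunc ℂ) f / RatFunc.X)
      * algebraMap (Polynomial ℂ) (RatFunc ℂ) (derivative f)

/-- `h = −z·L_z(f) + k(z+μ)f²`, which is a polynomial:
`h = −z(f·f'' − (f')²) − f·f' + k(z+μ)f²`. -/
noncomputable def hPoly (k μ : ℂ) (f : Polynomial ℂ) : Polynomial ℂ :=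
  -(X * (f * derivative (derivative f) - (derivative f) ^ 2)) - f * derivative f
    + Polynomial.C k * (X + Polynomial.C μ) * f ^ 2

namespace Derivation

variable {A R : Type*} [CommRing A] [CommRing R] [Algebra A R] (D : Derivation A R R) (z : R)

/-- `z · L_z(u)` for the derivation `D`; the paper's case is `D = d/dz`, `z = X`. -/
def scaledL (u : R) : R := z * (u * D (D u) - D u ^ 2) + D z * u * D u

theorem dvd_scaledL_sub (hz : D (D z) = 0) (P f : R) :
    f ∣ scaledL D z (P * f ^ 2 - scaledL D z f) - 2 * P * (P * f ^ 2 - scaledL D z f) ^ 2 := by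
  set h := P * f ^ 2 - scaledL D z f with hh
  rw [← Ideal.Quotient.eq_zero_iff_dvd]
  set π := Ideal.Quotient.mk (Ideal.span {f})
  have hf : π f = 0 := Ideal.Quotient.mk_singleton_self f
  have h0 : π h = π z * π (D f) ^ 2 := by
    simp only [hh, scaledL, map_sub, map_add, map_mul, map_pow, hf]
    ring
  have h1 : π (D h) = π z * π (D f) * π (D (D f)) := by
    simp only [hh, scaledL, map_sub, map_add, map_mul, leibniz, pow_two, smul_eq_mul, hf, hz]
    ring
  have h2 : π (D (D h)) = π z * π (D (D f)) ^ 2 - π (D z) * π (D f) * π (D (D f))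
      + 2 * π P * π (D f) ^ 2 := by
    simp only [hh, scaledL, map_sub, map_add, map_mul, leibniz, pow_two, smul_eq_mul, hf, hz,
      map_zero]
    ring
  simp only [scaledL, map_sub, map_add, map_mul, map_pow, map_ofNat, h0, h1, h2]
  ring

end Derivation

theorem stmt2_general (k μ : ℂ) (f : Polynomial ℂ)
    (h : Polynomial ℂ) (hh : h = hPoly k μ f) :
    f ∣ (X * (h * derivative (derivative h) - (derivative h) ^ 2) + h * derivative h
          - Polynomial.C (2 * k) * (X + Polynomial.C μ) * h ^ 2) := by
  have hX : derivative' (derivative' (X : ℂ[X])) = 0 := by simp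
  have hh' : h = C k * (X + C μ) * f ^ 2 - Derivation.scaledL derivative' X f := by
    rw [hh, hPoly, Derivation.scaledL]
    simp only [derivative'_apply, derivative_X, one_mul]
    ring
  have key := Derivation.dvd_scaledL_sub derivative' X hX (C k * (X + C μ)) f
  rw [← hh'] at key
  convert key using 1
  simp only [Derivation.scaledL, derivative'_apply, derivative_X, C_mul, map_ofNat]
  ring

theorem stmt2 (k μ : ℂ) (f : Polynomial ℂ)
    (h : Polynomial ℂ) (hh : h = hPoly k μ f)
    (hLz : algebraMap (Polynomial ℂ) (RatFunc ℂ) h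
      = -RatFunc.X * Lz f + RatFunc.C k * (RatFunc.X + RatFunc.C μ)
          * (algebraMap (Polynomial ℂ) (RatFunc ℂ) f) ^ 2) :
    f ∣ (X * (h * derivative (derivative h) - (derivative h) ^ 2) + h * derivative h
          - Polynomial.C (2 * k) * (X + Polynomial.C μ) * h ^ 2) :=
  stmt2_general k μ f h hh
end

section
/- Suppose S_N and S_{N−1} are polynomials with only simple roots satisfying S_{N+1}S_{N−1} = −z(S_N·S_N'' − (S_N')²) − S_N·S_N' + (z+μ)S_N² with S_{N+1} a polynomial. If z₀ ≠ 0 is a common root of S_N and S_{N−1}, then z₀ is a root of S_N' , hence a multiple root of S_N, a contradiction; therefore S_N and S_{N−1} have no common nonzero root. -/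
open Polynomial

theorem eval_mul_eval_derivative_sq_eq_zero {R : Type*} [CommRing R] {μ : R}
    {P Q T : R[X]}
    (hrec : T * P =
      -(X * (Q * derivative (derivative Q) - (derivative Q) ^ 2))
        - Q * derivative Q + (X + C μ) * Q ^ 2)
    {z : R} (hQ : Q.eval z = 0) (hP : P.eval z = 0) :
    z * (derivative Q).eval z ^ 2 = 0 := by
  have h := congrArg (eval z) hrec
  simp only [eval_mul, eval_add, eval_sub, eval_neg, eval_pow, eval_X, eval_C, hQ, hP] at h
  linear_combination -h

theorem stmt6_general (μ : ℂ) (SNm1 SN SNp1 : Polynomial ℂ)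
    (hrec : SNp1 * SNm1 =
      -(X * (SN * derivative (derivative SN) - (derivative SN) ^ 2))
        - SN * derivative SN + (X + Polynomial.C μ) * SN ^ 2)
    (hsimpleN : ∀ z : ℂ, SN.eval z = 0 → (derivative SN).eval z ≠ 0) :
    ∀ z₀ : ℂ, z₀ ≠ 0 → ¬(SN.eval z₀ = 0 ∧ SNm1.eval z₀ = 0) := by
  rintro z₀ hz ⟨hN, hNm1⟩
  have h := eval_mul_eval_derivative_sq_eq_zero hrec hN hNm1
  exact hsimpleN z₀ hN (pow_eq_zero_iff two_ne_zero |>.mp ((mul_eq_zero.mp h).resolve_left hz))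

theorem stmt6 (μ : ℂ) (SNm1 SN SNp1 : Polynomial ℂ)
    (hrec : SNp1 * SNm1 =
      -(X * (SN * derivative (derivative SN) - (derivative SN) ^ 2))
        - SN * derivative SN + (X + Polynomial.C μ) * SN ^ 2)
    (hsimpleN : ∀ z : ℂ, SN.eval z = 0 → (derivative SN).eval z ≠ 0)
    (hsimpleNm1 : ∀ z : ℂ, SNm1.eval z = 0 → (derivative SNm1).eval z ≠ 0) :
    ∀ z₀ : ℂ, z₀ ≠ 0 → ¬(SN.eval z₀ = 0 ∧ SNm1.eval z₀ = 0) :=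
  stmt6_general μ SNm1 SN SNp1 hrec hsimpleN
end

section
/- If a polynomial S satisfies the identity z²(S·S'''' − 4S'·S''' + 3(S'')²) + 2z(S·S''' − S'·S'') − 4z(z+μ)(S·S'' − (S')²) − 2S·S'' + 4μS·S' = 2n(n+1)S², and z₀ ≠ 0 is a root of S with S'(z₀) = 0, then also S''(z₀) = 0. -/
open Polynomial

theorem stmt7 (μ : ℂ) (n : ℕ) (S : Polynomial ℂ)
    (hident : X ^ 2 * (S * derivative (derivative (derivative (derivative S)))
        - 4 * derivative S * derivative (derivative (derivative S))
        + 3 * (derivative (derivative S)) ^ 2)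
      + 2 * X * (S * derivative (derivative (derivative S))
        - derivative S * derivative (derivative S))
      - 4 * X * (X + Polynomial.C μ) * (S * derivative (derivative S) - (derivative S) ^ 2)
      - 2 * S * derivative (derivative S) + 4 * Polynomial.C μ * S * derivative S
      = Polynomial.C (2 * (n : ℂ) * ((n : ℂ) + 1)) * S ^ 2)
    (z₀ : ℂ) (hz₀ : z₀ ≠ 0) (hroot : S.eval z₀ = 0)
    (hder : (derivative S).eval z₀ = 0) :
    (derivative (derivative S)).eval z₀ = 0 := by
  have hsq : 3 * (z₀ * (derivative (derivative S)).eval z₀) ^ 2 = 0 := by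
    have h := congrArg (eval z₀) hident
    simp only [eval_add, eval_sub, eval_mul, eval_pow, eval_X, eval_C, eval_ofNat,
      hroot, hder] at h
    linear_combination h
  simpa [hz₀] using hsq
end

section
/- If a polynomial S satisfies z²(S·S'''' − 4S'·S''' + 3(S'')²) + 2z(S·S''' − S'·S'') − 4z(z+μ)(S·S'' − (S')²) − 2S·S'' + 4μS·S' = 2n(n+1)S², then every nonzero root of S is simple. -/
/-!
Write `S = (X - a) ^ k * T` with `T a ≠ 0`. Then `(X - a) ^ j * S⁽ʲ⁾ = (X - a) ^ k * U j` with
`U j a = k (k - 1) ⋯ (k - j + 1) * T a`. Multiplying the identity by `(X - a) ^ 4` and cancelling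
`(X - a) ^ (2 * k)` leaves an identity in which every term except the one coming from
`S S'''' - 4 S' S''' + 3 S''²` carries a factor `X - a`; evaluating at `a` gives
`6 k (k - 1) a² (T a)² = 0`.
-/

open Polynomial

section
variable {R : Type*} [CommRing R] (a : R)

theorem pow_succ_mul_derivative_eq {P U : R[X]} {j k : ℕ}
    (h : (X - C a) ^ j * P = (X - C a) ^ k * U) :
    (X - C a) ^ (j + 1) * derivative P
      = (X - C a) ^ k * (C ((k : R) - j) * U + (X - C a) * derivative U) := by
  have hd := congrArg derivative h
  simp only [derivative_mul, derivative_X_sub_C_pow] at hd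
  have hpow : ∀ m : ℕ, C (m : R) * (X - C a) ^ (m - 1) * (X - C a) = C (m : R) * (X - C a) ^ m := by
    rintro (_ | m)
    · simp
    · rw [Nat.add_sub_cancel]; ring
  rw [map_sub]
  linear_combination (X - C a) * hd - P * hpow j + U * hpow k - C (j : R) * h

theorem exists_pow_mul_iterate_derivative_eq {S T : R[X]} {k : ℕ}
    (hS : S = (X - C a) ^ k * T) (j : ℕ) :
    ∃ U : R[X], (X - C a) ^ j * derivative^[j] S = (X - C a) ^ k * U ∧
      U.eval a = (descPochhammer R j).eval (k : R) * T.eval a := by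
  induction j with
  | zero => exact ⟨T, by simp [hS], by simp⟩
  | succ j ih =>
    obtain ⟨U, hU, hUa⟩ := ih
    refine ⟨_, by rw [Function.iterate_succ_apply']; exact pow_succ_mul_derivative_eq a hU, ?_⟩
    simp only [map_sub, map_natCast, eval_add, eval_mul, eval_sub, eval_natCast, eval_X, eval_C,
      sub_self, zero_mul, add_zero, hUa, descPochhammer_succ_eval]
    ring

theorem mul_sub_one_mul_eval_eq_zero_of_ode {μ c : R} {S T : R[X]} {k : ℕ}
    (hident : X ^ 2 * (S * derivative (derivative (derivative (derivative S)))
        - 4 * derivative S * derivative (derivative (derivative S))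
        + 3 * (derivative (derivative S)) ^ 2)
      + 2 * X * (S * derivative (derivative (derivative S))
        - derivative S * derivative (derivative S))
      - 4 * X * (X + C μ) * (S * derivative (derivative S) - (derivative S) ^ 2)
      - 2 * S * derivative (derivative S) + 4 * C μ * S * derivative S
      = C c * S ^ 2)
    (hS : S = (X - C a) ^ k * T) :
    6 * (k : R) * (k - 1) * a ^ 2 * T.eval a ^ 2 = 0 := by
  choose U hU hUa using exists_pow_mul_iterate_derivative_eq a hS
  set D := X - C a
  have hprod (i j : ℕ) : D ^ (i + j) * (derivative^[i] S * derivative^[j] S)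
      = D ^ (2 * k) * (U i * U j) := by
    linear_combination (D ^ j * derivative^[j] S) * hU i + (D ^ k * U i) * hU j
  have key : D ^ (2 * k) * (X ^ 2 * (U 0 * U 4 - 4 * (U 1 * U 3) + 3 * (U 2 * U 2))
      + D * (2 * X * (U 0 * U 3 - U 1 * U 2) - 4 * X * (X + C μ) * D * (U 0 * U 2 - U 1 * U 1)
        - 2 * D * (U 0 * U 2) + 4 * C μ * D ^ 2 * (U 0 * U 1) - C c * D ^ 3 * (U 0 * U 0))) = 0 := by
    linear_combination (norm := skip) D ^ 4 * hident
      - X ^ 2 * hprod 0 4 + 4 * X ^ 2 * hprod 1 3 - 3 * X ^ 2 * hprod 2 2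
      - 2 * X * D * hprod 0 3 + 2 * X * D * hprod 1 2
      + (4 * X * (X + C μ) + 2) * D ^ 2 * hprod 0 2 - 4 * X * (X + C μ) * D ^ 2 * hprod 1 1
      - 4 * C μ * D ^ 3 * hprod 0 1 + C c * D ^ 4 * hprod 0 0
    simp only [Function.iterate_succ_apply', Function.iterate_zero_apply]
    ring1
  have hQ := congrArg (eval a) (((monic_X_sub_C a).pow _).mul_right_eq_zero_iff.mp key)
  simp only [eval_add, eval_mul, eval_sub, eval_pow, eval_X, eval_C, eval_ofNat, D, sub_self,
    zero_mul, add_zero, hUa, descPochhammer_succ_eval, descPochhammer_zero, eval_one,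
    Nat.cast_ofNat, Nat.cast_one, Nat.cast_zero, eval_zero] at hQ
  linear_combination hQ

end

theorem stmt8 (μ : ℂ) (n : ℕ) (S : Polynomial ℂ) (hS : S ≠ 0)
    (hident : X ^ 2 * (S * derivative (derivative (derivative (derivative S)))
        - 4 * derivative S * derivative (derivative (derivative S))
        + 3 * (derivative (derivative S)) ^ 2)
      + 2 * X * (S * derivative (derivative (derivative S))
        - derivative S * derivative (derivative S))
      - 4 * X * (X + Polynomial.C μ) * (S * derivative (derivative S) - (derivative S) ^ 2)
      - 2 * S * derivative (derivative S) + 4 * Polynomial.C μ * S * derivative S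
      = Polynomial.C (2 * (n : ℂ) * ((n : ℂ) + 1)) * S ^ 2) :
    ∀ z₀ : ℂ, z₀ ≠ 0 → S.eval z₀ = 0 → Polynomial.rootMultiplicity z₀ S = 1 := by
  intro z₀ hz₀ hroot
  have hpos : 0 < S.rootMultiplicity z₀ := (rootMultiplicity_pos hS).mpr hroot
  have hT := S.eval_divByMonic_pow_rootMultiplicity_ne_zero z₀ hS
  have h := mul_sub_one_mul_eval_eq_zero_of_ode z₀ hident (S.pow_mul_divByMonic_rootMultiplicity_eq z₀).symm
  simp only [mul_eq_zero, pow_eq_zero_iff, ne_eq, OfNat.ofNat_ne_zero, not_false_eq_true, hz₀,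
    hT, Nat.cast_eq_zero, sub_eq_zero, Nat.cast_eq_one, or_false, false_or] at h
  omega
end

section
/- Let φ_n(μ) = S_n(0;μ) for the Umemura polynomials of P_III. Then for n ≥ 3, assuming the relevant φ's are nonzero, φ_{n+1} = (φ_n φ_{n−1}/φ_{n−2})·(2μ² − 2n² + 2n − 1 − φ_n φ_{n−3}/(φ_{n−1}φ_{n−2})), where this follows from the recurrence S_{n+1}S_{n−1} = −z(S_nS_n''−(S_n')²) − S_nS_n' + (z+μ)S_n² together with the auxiliary identity 2μS_n'(0) − S_n''(0) = n(n+1)S_n(0). -/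
/-!
Evaluating the recurrence and its derivative at `z = 0` relates `φ_{m±1}`, `S_{m±1}'(0)` to
`φ_m`, `S_m'(0)`, `S_m''(0)`. The auxiliary identity eliminates `S_m''(0)`, and the recurrence at
`0` for the indices `m` and `m ± 1` eliminates the first derivatives. What remains, after
cancelling `φ_m`, is the four-term relation
`φ_{m+2} φ_{m-1}² = (2μ² - 2m² - 2m - 1) φ_m φ_{m+1} φ_{m-1} - φ_{m+1}² φ_{m-2}`,
which at `m = n - 1` is the claim.
-/

open Polynomial

/-- The Umemura polynomials satisfy the Toda-type recurrence `S_{m+1} S_{m-1} = todaRHS μ S_m`. -/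
noncomputable def todaRHS {R : Type*} [CommRing R] (μ : R) (p : R[X]) : R[X] :=
  -(X * (p * derivative (derivative p) - (derivative p) ^ 2))
    - p * derivative p + (X + C μ) * p ^ 2

section todaRHS

variable {R : Type*} [CommRing R] (μ : R) (p : R[X])

theorem eval_zero_todaRHS :
    (todaRHS μ p).eval 0 = μ * p.eval 0 ^ 2 - p.eval 0 * (derivative p).eval 0 := by
  simp only [todaRHS, eval_add, eval_sub, eval_neg, eval_mul, eval_pow, eval_X, eval_C]
  ring

theorem eval_zero_derivative_todaRHS :
    (derivative (todaRHS μ p)).eval 0 =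
      p.eval 0 ^ 2 - 2 * p.eval 0 * (derivative (derivative p)).eval 0
        + 2 * μ * p.eval 0 * (derivative p).eval 0 := by
  simp only [todaRHS, derivative_add, derivative_sub, derivative_neg, derivative_mul,
    derivative_pow, derivative_X, derivative_C, eval_add, eval_sub, eval_neg, eval_mul,
    eval_pow, eval_X, eval_C, eval_one, eval_zero]
  ring

end todaRHS

section recurrence

variable {R : Type*} [CommRing R] {μ : R} {S : ℤ → R[X]}
  (hrec : ∀ m, S (m + 1) * S (m - 1) = todaRHS μ (S m))
include hrec

theorem eval_zero_succ_mul_eval_zero_pred (m : ℤ) :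
    (S (m + 1)).eval 0 * (S (m - 1)).eval 0 =
      μ * (S m).eval 0 ^ 2 - (S m).eval 0 * (derivative (S m)).eval 0 := by
  rw [← eval_zero_todaRHS, ← hrec, eval_mul]

theorem eval_zero_derivative_succ_mul_pred (m : ℤ)
    (haux : 2 * μ * (derivative (S m)).eval 0 - (derivative (derivative (S m))).eval 0 =
      m * (m + 1) * (S m).eval 0) :
    (derivative (S (m + 1))).eval 0 * (S (m - 1)).eval 0
        + (S (m + 1)).eval 0 * (derivative (S (m - 1))).eval 0 =
      (2 * m ^ 2 + 2 * m + 1 - 2 * μ ^ 2) * (S m).eval 0 ^ 2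
        + 2 * μ * (S (m + 1)).eval 0 * (S (m - 1)).eval 0 := by
  have hder := congrArg (fun p => (derivative p).eval 0) (hrec m)
  simp only [derivative_mul, eval_add, eval_mul, eval_zero_derivative_todaRHS] at hder
  linear_combination hder + 2 * (S m).eval 0 * haux
    - 2 * μ * eval_zero_succ_mul_eval_zero_pred hrec m

theorem eval_zero_add_two_mul_pred_sq [IsDomain R] (m : ℤ)
    (haux : 2 * μ * (derivative (S m)).eval 0 - (derivative (derivative (S m))).eval 0 =
      m * (m + 1) * (S m).eval 0)
    (hm : (S m).eval 0 ≠ 0) :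
    (S (m + 2)).eval 0 * (S (m - 1)).eval 0 ^ 2 =
      (2 * μ ^ 2 - 2 * m ^ 2 - 2 * m - 1) * (S m).eval 0 * (S (m + 1)).eval 0
          * (S (m - 1)).eval 0
        - (S (m + 1)).eval 0 ^ 2 * (S (m - 2)).eval 0 := by
  have hsucc := eval_zero_succ_mul_eval_zero_pred hrec (m + 1)
  have hpred := eval_zero_succ_mul_eval_zero_pred hrec (m - 1)
  rw [show m + 1 + 1 = m + 2 by ring, add_sub_cancel_right] at hsucc
  rw [sub_add_cancel, show m - 1 - 1 = m - 2 by ring] at hpred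
  apply mul_left_cancel₀ hm
  linear_combination (S (m - 1)).eval 0 ^ 2 * hsucc + (S (m + 1)).eval 0 ^ 2 * hpred
    - (S (m + 1)).eval 0 * (S (m - 1)).eval 0 * eval_zero_derivative_succ_mul_pred hrec m haux

end recurrence

theorem stmt11_general (μ : ℂ) (S : ℤ → Polynomial ℂ)
    (hrec : ∀ m : ℤ, S (m + 1) * S (m - 1) =
      -(X * (S m * derivative (derivative (S m)) - (derivative (S m)) ^ 2))
        - S m * derivative (S m) + (X + Polynomial.C μ) * (S m) ^ 2)
    (haux : ∀ m : ℤ, 0 ≤ m →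
      2 * μ * (derivative (S m)).eval 0 - (derivative (derivative (S m))).eval 0
        = (m : ℂ) * ((m : ℂ) + 1) * (S m).eval 0)
    (n : ℤ) (hn : 3 ≤ n)
    (hnz : ∀ m : ℤ, n - 2 ≤ m → m ≤ n + 1 → (S m).eval 0 ≠ 0) :
    (S (n + 1)).eval 0 =
      ((S n).eval 0 * (S (n - 1)).eval 0 / (S (n - 2)).eval 0) *
        (2 * μ ^ 2 - 2 * (n : ℂ) ^ 2 + 2 * (n : ℂ) - 1
          - (S n).eval 0 * (S (n - 3)).eval 0 / ((S (n - 1)).eval 0 * (S (n - 2)).eval 0)) := by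
  have h1 := hnz (n - 1) (by omega) (by omega)
  have h2 := hnz (n - 2) (by omega) (by omega)
  have hfour := eval_zero_add_two_mul_pred_sq hrec (n - 1)
    (by exact_mod_cast haux (n - 1) (by omega)) h1
  rw [show n - 1 + 2 = n + 1 by ring, show n - 1 + 1 = n by ring,
    show n - 1 - 1 = n - 2 by ring, show n - 1 - 2 = n - 3 by ring] at hfour
  push_cast at hfour
  field_simp
  linear_combination hfour

/-- For the Umemura polynomials `S_n(z;μ)` with `φ_n = S_n(0;μ)`:
`φ_{n+1} = (φ_n φ_{n−1}/φ_{n−2})·(2μ² − 2n² + 2n − 1 − φ_n φ_{n−3}/(φ_{n−1}φ_{n−2}))` for `n ≥ 3`,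
given the recurrence and the auxiliary identity `2μS_m'(0) − S_m''(0) = m(m+1)S_m(0)`. -/
theorem stmt11 (μ : ℂ) (S : ℤ → Polynomial ℂ)
    (hm1 : S (-1) = 1) (h0 : S 0 = 1)
    (hrec : ∀ m : ℤ, S (m + 1) * S (m - 1) =
      -(X * (S m * derivative (derivative (S m)) - (derivative (S m)) ^ 2))
        - S m * derivative (S m) + (X + Polynomial.C μ) * (S m) ^ 2)
    (haux : ∀ m : ℤ, 0 ≤ m →
      2 * μ * (derivative (S m)).eval 0 - (derivative (derivative (S m))).eval 0
        = (m : ℂ) * ((m : ℂ) + 1) * (S m).eval 0)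
    (n : ℤ) (hn : 3 ≤ n)
    (hnz : ∀ m : ℤ, n - 2 ≤ m → m ≤ n + 1 → (S m).eval 0 ≠ 0) :
    (S (n + 1)).eval 0 =
      ((S n).eval 0 * (S (n - 1)).eval 0 / (S (n - 2)).eval 0) *
        (2 * μ ^ 2 - 2 * (n : ℂ) ^ 2 + 2 * (n : ℂ) - 1
          - (S n).eval 0 * (S (n - 3)).eval 0 / ((S (n - 1)).eval 0 * (S (n - 2)).eval 0)) :=
  stmt11_general μ S hrec haux n hn hnz
end

section
/- Define φ_n(μ) for n ≥ 1 by φ_n(μ) = μ^{⌈n/2⌉}·∏_{j=1}^{n−1}(μ²−j²)^{γ_j^n}, where γ_{2j}^n = ⌈n/2⌉ − j and γ_{2j+1}^n = ⌊n/2⌋ − j. Then this sequence satisfies the recurrence φ_{n+1} = (φ_n φ_{n−1}/φ_{n−2})·(2μ² − 2n² + 2n − 1 − φ_n φ_{n−3}/(φ_{n−1}φ_{n−2})) for n ≥ 3, as an identity of rational functions in μ, with φ_0 = φ_{−1} = 1, φ_1 = μ, φ_2 = μ(μ²−1), φ_3 = μ²(μ²−1)(μ²−4). -/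
/-- The exponents `γ_j^n`: `γ_{2t}^n = ⌈n/2⌉ − t` and `γ_{2t+1}^n = ⌊n/2⌋ − t`. -/
def gam (j n : ℕ) : ℕ := if Even j then (n + 1) / 2 - j / 2 else n / 2 - j / 2

/-- `φ_n(μ) = μ^{⌈n/2⌉}·∏_{j=1}^{n−1}(μ²−j²)^{γ_j^n}` as a rational function in `μ`
(here `μ = RatFunc.X`). -/
noncomputable def phi (n : ℕ) : RatFunc ℚ :=
  RatFunc.X ^ ((n + 1) / 2) *
    ∏ j ∈ Finset.Icc 1 (n - 1), (RatFunc.X ^ 2 - (j : RatFunc ℚ) ^ 2) ^ gam j n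

noncomputable def Afac (j : ℕ) : RatFunc ℚ := RatFunc.X ^ 2 - (j : RatFunc ℚ) ^ 2

noncomputable def Qf (n : ℕ) : RatFunc ℚ := RatFunc.X * ∏ j ∈ Finset.Icc 1 (n - 1), Afac j

lemma Afac_ne (j : ℕ) : Afac j ≠ 0 := by
  have : Afac j = algebraMap (Polynomial ℚ) (RatFunc ℚ)
      (Polynomial.X ^ 2 - Polynomial.C ((j : ℚ)) ^ 2) := by
    simp [Afac, RatFunc.algebraMap_X, map_sub, map_pow, RatFunc.algebraMap_C]
  rw [this, ← map_pow]
  simp only [ne_eq, FaithfulSMul.algebraMap_eq_zero_iff]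
  exact Polynomial.X_pow_sub_C_ne_zero two_pos _

lemma phi_ne (n : ℕ) : phi n ≠ 0 := by
  unfold phi
  apply mul_ne_zero (pow_ne_zero _ RatFunc.X_ne_zero)
  rw [Finset.prod_ne_zero_iff]
  exact fun j _ => pow_ne_zero _ (Afac_ne j)

lemma Qf_ne (n : ℕ) : Qf n ≠ 0 := by
  unfold Qf
  apply mul_ne_zero (RatFunc.X_ne_zero (K := ℚ))
  rw [Finset.prod_ne_zero_iff]
  exact fun j _ => Afac_ne j

lemma gam_succ_succ {j n : ℕ} (h2 : j ≤ n + 1) : gam j (n + 2) = gam j n + 1 := by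
  unfold gam
  rcases Nat.even_or_odd j with h | h
  · have := Nat.even_iff.mp h
    simp only [if_pos h]; omega
  · have := Nat.odd_iff.mp h
    simp only [if_neg (Nat.not_even_iff_odd.mpr h)]; omega

lemma gam_eq_zero {j n : ℕ} (h : n ≤ j) : gam j n = 0 := by
  unfold gam
  rcases Nat.even_or_odd j with h' | h'
  · have := Nat.even_iff.mp h'
    simp only [if_pos h']; omega
  · have := Nat.odd_iff.mp h'
    simp only [if_neg (Nat.not_even_iff_odd.mpr h')]; omega

lemma phi_step (n : ℕ) : phi (n + 2) = Qf (n + 2) * phi n := by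
  unfold phi Qf
  have h1 : (n + 2 + 1) / 2 = (n + 1) / 2 + 1 := by omega
  have h2 : (n + 2) - 1 = n + 1 := rfl
  rw [h1, h2, pow_succ]
  have hprod : ∏ j ∈ Finset.Icc 1 (n + 1), Afac j ^ gam j (n + 2)
      = (∏ j ∈ Finset.Icc 1 (n + 1), Afac j) *
        ∏ j ∈ Finset.Icc 1 (n - 1), Afac j ^ gam j n := by
    have e1 : ∀ j ∈ Finset.Icc 1 (n + 1), Afac j ^ gam j (n + 2)
        = Afac j * Afac j ^ gam j n := by
      intro j hj
      rw [Finset.mem_Icc] at hj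
      rw [gam_succ_succ hj.2, pow_succ]
      ring
    rw [Finset.prod_congr rfl e1, Finset.prod_mul_distrib]
    congr 1
    refine (Finset.prod_subset ?_ ?_).symm
    · intro j hj
      rw [Finset.mem_Icc] at hj ⊢
      omega
    · intro j hj hj'
      rw [Finset.mem_Icc] at hj hj'
      rw [gam_eq_zero (by omega), pow_zero]
  show RatFunc.X ^ ((n+1)/2) * RatFunc.X * ∏ j ∈ Finset.Icc 1 (n+1), Afac j ^ gam j (n+2)
      = _
  rw [hprod]
  simp only [Afac]
  ring

lemma Qf_step (n : ℕ) : Qf (n + 3) = Qf (n + 2) * Afac (n + 2) := by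
  unfold Qf
  have h1 : (n + 3) - 1 = n + 2 := rfl
  have h2 : (n + 2) - 1 = n + 1 := rfl
  rw [h1, h2, Finset.prod_Icc_succ_top (by omega : 1 ≤ n + 2)]
  ring

theorem stmt12 :
    phi 0 = 1 ∧ phi 1 = RatFunc.X ∧ phi 2 = RatFunc.X * (RatFunc.X ^ 2 - 1) ∧
      phi 3 = RatFunc.X ^ 2 * (RatFunc.X ^ 2 - 1) * (RatFunc.X ^ 2 - 4) ∧
      ∀ n : ℕ, 3 ≤ n →
        phi (n + 1) = (phi n * phi (n - 1) / phi (n - 2)) *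
          (2 * RatFunc.X ^ 2 - 2 * (n : RatFunc ℚ) ^ 2 + 2 * (n : RatFunc ℚ) - 1
            - phi n * phi (n - 3) / (phi (n - 1) * phi (n - 2))) := by
  refine ⟨?_, ?_, ?_, ?_, ?_⟩
  · simp [phi]
  · simp [phi]
  · norm_num [phi, gam, Finset.Icc_self]
  · norm_num [phi, gam, Finset.prod_Icc_succ_top, Finset.Icc_self]
    ring
  · intro n hn
    obtain ⟨m, rfl⟩ : ∃ m, n = m + 3 := ⟨n - 3, by omega⟩
    have e1 : m + 3 - 1 = m + 2 := rfl
    have e2 : m + 3 - 2 = m + 1 := rfl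
    have e3 : m + 3 - 3 = m := rfl
    rw [e1, e2, e3]
    have h4 : phi (m + 4) = Qf (m + 4) * phi (m + 2) := phi_step (m + 2)
    have h3 : phi (m + 3) = Qf (m + 3) * phi (m + 1) := phi_step (m + 1)
    have h2 : phi (m + 2) = Qf (m + 2) * phi m := phi_step m
    have q4 : Qf (m + 4) = Qf (m + 3) * Afac (m + 3) := Qf_step (m + 1)
    have q3 : Qf (m + 3) = Qf (m + 2) * Afac (m + 2) := Qf_step m
    rw [show m + 3 + 1 = m + 4 from rfl, h4, h3, h2, q4, q3]
    have hA2 : Afac (m + 2) = RatFunc.X ^ 2 - ((m : RatFunc ℚ) + 2) ^ 2 := by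
      unfold Afac; push_cast; ring
    have hA3 : Afac (m + 3) = RatFunc.X ^ 2 - ((m : RatFunc ℚ) + 3) ^ 2 := by
      unfold Afac; push_cast; ring
    rw [hA2, hA3]
    push_cast
    field_simp [phi_ne, Qf_ne]
    ring
end

section
/- Let μ ∈ ℤ∖{0} and suppose S_n(z) = z^σ·g(z) with g(z) = ∑_{j=0}^k a_j z^j, a_0 ≠ 0, satisfies the fourth-order identity z²(S_nS_n''''−4S_n'S_n'''+3(S_n'')²) + 2z(S_nS_n'''−S_n'S_n'') − 4z(z+μ)(S_nS_n''−(S_n')²) − 2S_nS_n'' + 4μS_nS_n' = 2n(n+1)S_n². Then a_1 = μa_0. -/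
/-!
Put `T i = X ^ i * S⁽ⁱ⁾`. Multiplied by `X ^ 2`, the identity becomes a quadratic form in
`T 0, …, T 4` with polynomial coefficients (`eulerForm`). For `S = X ^ σ * g`, each `T i` is
`X ^ σ` times a polynomial whose `j`-th coefficient is `(σ + j)(σ + j - 1)⋯(σ + j - i + 1) a_j`,
so the form is `X ^ (2σ)` times the same form in these polynomials. Its coefficient of `X`
(that of `z ^ (2σ - 1)` in the identity) is `8 σ a₀ (μ a₀ - a₁)`, and `σ a₀ ≠ 0`.
-/

open Polynomial

namespace Polynomial

variable {R : Type*} [CommRing R]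

theorem coeff_X_pow_mul_iterate_derivative (p : R[X]) (i m : ℕ) :
    (X ^ i * derivative^[i] p).coeff m = (descPochhammer R i).eval (m : R) * p.coeff m := by
  rw [coeff_X_pow_mul', descPochhammer_eval_eq_descFactorial]
  split_ifs with h
  · obtain ⟨k, rfl⟩ := exists_add_of_le h
    rw [coeff_iterate_derivative, nsmul_eq_mul, Nat.add_sub_cancel_left, add_comm k i]
  · rw [Nat.descFactorial_eq_zero_iff_lt.mpr (not_le.mp h), Nat.cast_zero, zero_mul]

theorem exists_X_pow_mul_iterate_derivative_X_pow_mul (σ i : ℕ) (g : R[X]) :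
    ∃ u : R[X], X ^ i * derivative^[i] (X ^ σ * g) = X ^ σ * u ∧
      ∀ k, u.coeff k = (descPochhammer R i).eval ((σ : R) + k) * g.coeff k := by
  obtain ⟨u, hu⟩ : X ^ σ ∣ X ^ i * derivative^[i] (X ^ σ * g) := by
    refine X_pow_dvd_iff.mpr fun d hd => ?_
    rw [coeff_X_pow_mul_iterate_derivative, coeff_X_pow_mul', if_neg (not_le.mpr hd), mul_zero]
  refine ⟨u, hu, fun k => ?_⟩
  have h := congrArg (coeff · (k + σ)) hu
  simp only [coeff_X_pow_mul_iterate_derivative, coeff_X_pow_mul] at h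
  rw [← h]
  push_cast
  ring_nf

end Polynomial

variable {R : Type*} [CommRing R]

noncomputable def eulerForm (μ c : R) (t : ℕ → R[X]) : R[X] :=
  t 0 * t 4 - 4 * t 1 * t 3 + 3 * t 2 ^ 2 + 2 * t 0 * t 3 - 2 * t 1 * t 2 - 2 * t 0 * t 2
    - 4 * X * (X + C μ) * (t 0 * t 2 - t 1 ^ 2) + 4 * C μ * X * t 0 * t 1 - C c * X ^ 2 * t 0 ^ 2

theorem eulerForm_mul_left (μ c : R) (r : R[X]) (t : ℕ → R[X]) :
    eulerForm μ c (fun i => r * t i) = r ^ 2 * eulerForm μ c t := by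
  simp only [eulerForm]
  ring

theorem coeff_one_eulerForm (μ c s a₀ a₁ : R) (t : ℕ → R[X])
    (h₀ : ∀ i, (t i).coeff 0 = (descPochhammer R i).eval s * a₀)
    (h₁ : ∀ i, (t i).coeff 1 = (descPochhammer R i).eval (s + 1) * a₁) :
    (eulerForm μ c t).coeff 1 = 8 * s * a₀ * (μ * a₀ - a₁) := by
  simp only [eulerForm, coeff_add, coeff_sub, mul_coeff_one, mul_coeff_zero, pow_two, h₀, h₁,
    descPochhammer_succ_eval, descPochhammer_zero, eval_one, coeff_C_zero, coeff_C_succ,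
    coeff_X_zero, coeff_X_one, coeff_ofNat_zero, coeff_ofNat_succ]
  push_cast
  ring

theorem stmt15_general (μ : ℤ) (n : ℕ) (σ : ℕ) (hσ : 1 ≤ σ)
    (g : Polynomial ℂ) (hg0 : g.coeff 0 ≠ 0) (S : Polynomial ℂ)
    (hS : S = X ^ σ * g)
    (hident : X ^ 2 * (S * derivative (derivative (derivative (derivative S)))
        - 4 * derivative S * derivative (derivative (derivative S))
        + 3 * (derivative (derivative S)) ^ 2)
      + 2 * X * (S * derivative (derivative (derivative S))
        - derivative S * derivative (derivative S))
      - 4 * X * (X + Polynomial.C (μ : ℂ)) * (S * derivative (derivative S) - (derivative S) ^ 2)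
      - 2 * S * derivative (derivative S) + 4 * Polynomial.C (μ : ℂ) * S * derivative S
      = Polynomial.C (2 * (n : ℂ) * ((n : ℂ) + 1)) * S ^ 2) :
    g.coeff 1 = (μ : ℂ) * g.coeff 0 := by
  have hform : eulerForm (μ : ℂ) (2 * n * (n + 1)) (fun i => X ^ i * derivative^[i] S) = 0 := by
    simp only [eulerForm, Function.iterate_succ_apply', Function.iterate_zero_apply]
    linear_combination X ^ 2 * hident
  rw [hS] at hform
  choose u hu hcoeff using fun i => exists_X_pow_mul_iterate_derivative_X_pow_mul σ i g
  simp only [hu, eulerForm_mul_left] at hform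
  have h := congrArg (coeff · (1 + σ * 2)) hform
  simp only [← pow_mul, coeff_X_pow_mul, coeff_zero, coeff_one_eulerForm _ _ (σ : ℂ) (g.coeff 0)
    (g.coeff 1) u (by simpa using hcoeff · 0) (by simpa using hcoeff · 1)] at h
  have hσ0 : (σ : ℂ) ≠ 0 := Nat.cast_ne_zero.mpr (by omega)
  have hg1 := (mul_eq_zero.mp h).resolve_left (by simp [hσ0, hg0])
  linear_combination -hg1

theorem stmt15 (μ : ℤ) (hμ : μ ≠ 0) (n : ℕ) (σ : ℕ) (hσ : 1 ≤ σ)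
    (g : Polynomial ℂ) (hg0 : g.coeff 0 ≠ 0) (S : Polynomial ℂ)
    (hS : S = X ^ σ * g)
    (hident : X ^ 2 * (S * derivative (derivative (derivative (derivative S)))
        - 4 * derivative S * derivative (derivative (derivative S))
        + 3 * (derivative (derivative S)) ^ 2)
      + 2 * X * (S * derivative (derivative (derivative S))
        - derivative S * derivative (derivative S))
      - 4 * X * (X + Polynomial.C (μ : ℂ)) * (S * derivative (derivative S) - (derivative S) ^ 2)
      - 2 * S * derivative (derivative S) + 4 * Polynomial.C (μ : ℂ) * S * derivative S
      = Polynomial.C (2 * (n : ℂ) * ((n : ℂ) + 1)) * S ^ 2) :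
    g.coeff 1 = (μ : ℂ) * g.coeff 0 :=
  stmt15_general μ n σ hσ g hg0 S hS hident
end
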